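/- Assume μ > 1 and μλ − μ − λ > 0 (so also λ > 0). Then H_{μλ} has no even eigenvalue in (−∞, 0); moreover, if z_μ > 2 is an even eigenvalue of H_{μ0} and z_λ > 2 is an even eigenvalue of H_{0λ}, then there exist even eigenvalues ζ₁ and ζ₂ of H_{μλ} such that 2 < ζ₁ < min(z_μ, z_λ) ≤ max(z_μ, z_λ) < ζ₂. -/

import Mathlib

/-!
Write `r ∈ (-1, 0)` for the decay rate of a bound state, whose energy is then
`z = 1 - (r + r⁻¹) / 2 > 2`, an increasing function of `r`. Since `v` vanishes for `|x| ≥ 2`, an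
even `ℓ²` eigenfunction with eigenvalue `z > 2` is proportional to `r ^ |x|` for `|x| ≥ 1` (the
other solution of the recurrence grows like `r ^ (-|x|)`), and the equations at `x = 0, ±1` reduce
to the secular equation `g(r) = (1 + λ r) (μ + (r + r⁻¹) / 2) - r = 0`; conversely every root of
`g` in `(-1, 0)` gives such an eigenvalue. Now `g(-1) = -(μλ - μ - λ) < 0` and `g → -∞` as
`r → 0⁻`, while at the decay rates `r_μ`, `r_λ` of the eigenvalues of `H_{μ0}` and `H_{0λ}` one
finds `g(r_μ) = λ r_μ² > 0` and `g(r_λ) = μ (1 + λ r_λ) > 0`. The intermediate value theorem gives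
a root below `min(r_μ, r_λ)` and one above `max(r_μ, r_λ)`. Negative eigenvalues are excluded by
the maximum principle, since `v ≥ 0`.
-/

open MeasureTheory Real Filter Topology

/-- The potential `v(0) = μ`, `v(±1) = λ/2`, `v(x) = 0` for `|x| > 1`. -/
noncomputable def pot (μ lam : ℝ) (x : ℤ) : ℝ :=
  if x = 0 then μ else if x = 1 ∨ x = -1 then lam / 2 else 0

/-- A real number `z` is an *even eigenvalue* of the discrete Schrödinger operator
`H_{μλ}` on `ℓ²(ℤ; ℂ)`, `(H_{μλ}ψ)(x) = ψ(x) − (ψ(x+1) + ψ(x−1))/2 + v(x)ψ(x)`,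
if there is a nonzero even `ψ ∈ ℓ²(ℤ; ℂ)` with `H_{μλ}ψ = zψ`. -/
def IsEvenEigenvalue (μ lam z : ℝ) : Prop :=
  ∃ ψ : lp (fun _ : ℤ => ℂ) 2, ψ ≠ 0 ∧ (∀ x : ℤ, ψ (-x) = ψ x) ∧
    ∀ x : ℤ, ψ x - (ψ (x + 1) + ψ (x - 1)) / 2 + (pot μ lam x : ℂ) * ψ x = (z : ℂ) * ψ x

open Set

theorem Memℓp.tendsto_norm_cofinite_zero {α : Type*} {E : α → Type*}
    [∀ i, NormedAddCommGroup (E i)] {p : ENNReal} {f : ∀ i, E i} (hp : 0 < p.toReal)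
    (hf : Memℓp f p) : Tendsto (fun i => ‖f i‖) cofinite (𝓝 0) := by
  have h := ((hf.summable hp).tendsto_cofinite_zero).rpow_const (p := p.toReal⁻¹) (by simp)
  rw [Real.zero_rpow (inv_ne_zero hp.ne')] at h
  exact h.congr fun i => Real.rpow_rpow_inv (norm_nonneg _) hp.ne'

lemma succ_eq_mul_of_recurrence_of_tendsto_zero {𝕜 : Type*} [NormedField 𝕜] {u : ℕ → 𝕜} {r : 𝕜}
    (hr0 : r ≠ 0) (hr1 : ‖r‖ < 1) (hrec : ∀ n, u (n + 2) = (r + r⁻¹) * u (n + 1) - u n)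
    (hu : Tendsto u atTop (𝓝 0)) (n : ℕ) : u (n + 1) = r * u n := by
  set D : ℕ → 𝕜 := fun n => u (n + 1) - r * u n
  -- `D` grows by the factor `r⁻¹`, of norm `> 1`, yet tends to zero.
  have hD : ∀ n, D (n + 1) = r⁻¹ * D n := fun n => by
    simp only [D, hrec]; field_simp; ring
  have hmono : Monotone fun n => ‖D n‖ := monotone_nat_of_le_succ fun n => by
    rw [hD, norm_mul, norm_inv]
    exact le_mul_of_one_le_left (norm_nonneg _) (one_le_inv₀ (norm_pos_iff.mpr hr0) |>.mpr hr1.le)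
  have hlim : Tendsto (fun n => ‖D n‖) atTop (𝓝 0) := by
    simpa using ((hu.comp (tendsto_add_atTop_nat 1)).sub (hu.const_mul r)).norm
  exact sub_eq_zero.mp (norm_le_zero_iff.mp (hmono.ge_of_tendsto hlim n))

lemma summable_pow_natAbs {a : ℝ} (h0 : 0 ≤ a) (h1 : a < 1) :
    Summable fun x : ℤ => a ^ x.natAbs :=
  have h := summable_geometric_of_lt_one h0 h1
  .of_nat_of_neg (by simpa using h) (by simpa using h)

theorem nonneg_of_eigen_of_nonneg_potential {V : ℤ → ℝ} (hV : ∀ x, 0 ≤ V x) {ψ : ℤ → ℂ}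
    (hψ : Tendsto (fun x => ‖ψ x‖) cofinite (𝓝 0)) (hψ0 : ψ ≠ 0) {z : ℝ}
    (h : ∀ x, ψ x - (ψ (x + 1) + ψ (x - 1)) / 2 + V x * ψ x = z * ψ x) : 0 ≤ z := by
  obtain ⟨a, ha⟩ := Function.ne_iff.mp hψ0
  obtain ⟨x₀, hmax⟩ : ∃ x₀, ∀ x, ‖ψ x‖ ≤ ‖ψ x₀‖ :=
    continuous_of_discreteTopology.exists_forall_ge' a <| by
      rw [cocompact_eq_cofinite]
      exact (hψ.eventually_lt_const (norm_pos_iff.mpr ha)).mono fun _ => le_of_lt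
  have hM : 0 < ‖ψ x₀‖ := (norm_pos_iff.mpr ha).trans_le (hmax a)
  have hx₀ : ((1 + V x₀ - z : ℝ) : ℂ) * ψ x₀ = (ψ (x₀ + 1) + ψ (x₀ - 1)) / 2 := by
    push_cast; linear_combination h x₀
  have hnorm : (1 + V x₀ - z) * ‖ψ x₀‖ ≤ ‖ψ x₀‖ :=
    calc (1 + V x₀ - z) * ‖ψ x₀‖ ≤ ‖((1 + V x₀ - z : ℝ) : ℂ) * ψ x₀‖ := by
          rw [norm_mul, Complex.norm_real, Real.norm_eq_abs]
          gcongr; exact le_abs_self _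
      _ ≤ (‖ψ (x₀ + 1)‖ + ‖ψ (x₀ - 1)‖) / 2 := by
          rw [hx₀, norm_div, Complex.norm_ofNat]; gcongr; exact norm_add_le _ _
      _ ≤ ‖ψ x₀‖ := by linarith [hmax (x₀ + 1), hmax (x₀ - 1)]
  nlinarith [hV x₀]

lemma pot_neg (μ lam : ℝ) (x : ℤ) : pot μ lam (-x) = pot μ lam x := by
  unfold pot; split_ifs <;> first | rfl | omega

lemma pot_nonneg {μ lam : ℝ} (hμ : 0 ≤ μ) (hlam : 0 ≤ lam) (x : ℤ) : 0 ≤ pot μ lam x := by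
  unfold pot; split_ifs <;> linarith

lemma pot_eq_zero_of_two_le (μ lam : ℝ) {x : ℤ} (hx : 2 ≤ x) : pot μ lam x = 0 := by
  simp only [pot]; split_ifs <;> first | rfl | omega

theorem not_isEvenEigenvalue_of_neg {μ lam z : ℝ} (hμ : 0 ≤ μ) (hlam : 0 ≤ lam) (hz : z < 0) :
    ¬ IsEvenEigenvalue μ lam z := fun ⟨ψ, hψ0, _, heq⟩ =>
  hz.not_ge <| nonneg_of_eigen_of_nonneg_potential (pot_nonneg hμ hlam)
    (Memℓp.tendsto_norm_cofinite_zero (by norm_num) (lp.memℓp ψ))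
    (fun h0 => hψ0 (lp.eq_zero_iff_coeFn_eq_zero.mpr h0)) heq

-- `boundState lam r` is the even solution `r ^ |x|` of the free equation away from `0`, rescaled
-- at `0` so that the equation at `x = ±1` holds; its eigenvalue is `energy r`, and the equation
-- at `x = 0` holds iff `secular μ lam r = 0`.
noncomputable def energy (r : ℝ) : ℝ := 1 - (r + r⁻¹) / 2

noncomputable def secular (μ lam r : ℝ) : ℝ := (1 + lam * r) * (μ + (r + r⁻¹) / 2) - r

noncomputable def boundState (lam r : ℝ) (x : ℤ) : ℝ :=
  if x = 0 then 1 + lam * r else r ^ x.natAbs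

lemma two_lt_energy {r : ℝ} (hr : r < 0) (hr1 : r ≠ -1) : 2 < energy r := by
  have hsq : 0 < (r + 1) ^ 2 := sq_pos_of_ne_zero fun h => hr1 (by linarith)
  have hr0 := hr.ne
  rw [energy, ← sub_pos, show 1 - (r + r⁻¹) / 2 - 2 = (r + 1) ^ 2 / (-2 * r) by field_simp; ring]
  exact div_pos hsq (by linarith)

lemma energy_strictMonoOn : StrictMonoOn energy (Ioo (-1) 0) := by
  intro a ha b hb hab
  have hab0 : 0 < a * b := mul_pos_of_neg_of_neg ha.2 hb.2
  have hdiff : energy b - energy a = (b - a) * (1 - a * b) / (2 * (a * b)) := by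
    rw [energy, energy]; field_simp [ha.2.ne, hb.2.ne]; ring
  have hab1 : a * b < 1 := by
    nlinarith [mul_pos (neg_pos.mpr ha.2) (by linarith [hb.1] : 0 < 1 + b), ha.1]
  have : 0 < energy b - energy a := by
    rw [hdiff]; exact div_pos (mul_pos (by linarith) (by linarith)) (by positivity)
  linarith

lemma exists_energy_eq {z : ℝ} (hz : 2 < z) : ∃ r ∈ Ioo (-1) 0, energy r = z := by
  obtain ⟨t, ht, rfl⟩ : ∃ t < -1, z = 1 - t := ⟨1 - z, by linarith, by ring⟩
  obtain ⟨s, hs, hsq⟩ : ∃ s < -1, s ^ 2 - 2 * t * s + 1 = 0 :=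
    ⟨t - √(t ^ 2 - 1), by linarith [Real.sqrt_nonneg (t ^ 2 - 1)],
      by nlinarith [Real.sq_sqrt (show 0 ≤ t ^ 2 - 1 by nlinarith)]⟩
  refine ⟨s⁻¹, ⟨?_, inv_lt_zero.mpr (by linarith)⟩, ?_⟩
  · rw [neg_lt, ← inv_neg]; exact inv_lt_one_of_one_lt₀ (by linarith)
  · have : s ≠ 0 := by linarith
    rw [energy, inv_inv]; field_simp; linear_combination -hsq

lemma boundState_neg (lam r : ℝ) (x : ℤ) : boundState lam r (-x) = boundState lam r x := by
  simp [boundState]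

lemma boundState_eigen {μ lam r : ℝ} (hr : r ≠ 0) (h : secular μ lam r = 0) (x : ℤ) :
    boundState lam r x - (boundState lam r (x + 1) + boundState lam r (x - 1)) / 2
      + pot μ lam x * boundState lam r x = energy r * boundState lam r x := by
  wlog hx : 0 ≤ x generalizing x
  · have := this (-x) (by omega)
    rwa [boundState_neg, pot_neg, show -x + 1 = -(x - 1) by ring, show -x - 1 = -(x + 1) by ring,
      boundState_neg, boundState_neg, add_comm (boundState lam r (x - 1))] at this
  obtain ⟨n, rfl⟩ := Int.eq_ofNat_of_zero_le hx
  unfold secular at h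
  rcases n with _ | _ | n
  · simp only [boundState, CharP.cast_eq_zero, ↓reduceIte, zero_add, one_ne_zero, isUnit_one,
      Int.natAbs_of_isUnit, pow_one, zero_sub, Int.reduceNeg, neg_eq_zero, IsUnit.neg_iff,
      add_self_div_two, pot, energy]
    linear_combination h
  · simp only [boundState, zero_add, Nat.cast_one, one_ne_zero, ↓reduceIte, isUnit_one,
      Int.natAbs_of_isUnit, pow_one, Int.reduceAdd, OfNat.ofNat_ne_zero, Int.reduceAbs, sub_self,
      pot, Int.reduceNeg, reduceCtorEq, or_false, energy]
    field_simp
    ring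
  · have hpow (k : ℕ) : boundState lam r (k + 1 : ℕ) = r ^ (k + 1) := by
      simp only [boundState, Int.natAbs_natCast, Nat.cast_eq_zero, Nat.add_one_ne_zero, if_false]
    rw [show ((n + 1 + 1 : ℕ) : ℤ) + 1 = (n + 2 + 1 : ℕ) by push_cast; ring,
      show ((n + 1 + 1 : ℕ) : ℤ) - 1 = (n + 1 : ℕ) by push_cast; ring,
      pot_eq_zero_of_two_le μ lam (by omega), hpow, hpow, hpow, energy]
    field_simp
    ring

lemma memℓp_boundState (lam : ℝ) {r : ℝ} (hr : |r| < 1) :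
    Memℓp (fun x => (boundState lam r x : ℂ)) 2 := by
  refine memℓp_gen <| .of_norm_bounded_eventually
    (summable_pow_natAbs (sq_nonneg r) (by nlinarith [abs_nonneg r, sq_abs r])) ?_
  filter_upwards [(Set.finite_singleton (0 : ℤ)).compl_mem_cofinite] with x hx
  simp only [Set.mem_compl_iff, Set.mem_singleton_iff] at hx
  simp only [boundState, hx, ↓reduceIte, Complex.ofReal_pow, norm_pow, Complex.norm_real,
    norm_eq_abs, ENNReal.toReal_ofNat, rpow_ofNat, abs_abs]
  rw [← pow_mul, mul_comm, pow_mul, sq_abs]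

theorem isEvenEigenvalue_energy {μ lam r : ℝ} (hr0 : r ≠ 0) (hr1 : |r| < 1)
    (h : secular μ lam r = 0) : IsEvenEigenvalue μ lam (energy r) := by
  refine ⟨⟨_, memℓp_boundState lam hr1⟩, fun hψ => hr0 ?_, fun x => ?_, fun x => ?_⟩
  · simpa [boundState] using congrArg (fun ψ : lp (fun _ : ℤ => ℂ) 2 => ψ 1) hψ
  · simp [boundState_neg]
  · change (boundState lam r x : ℂ) - (boundState lam r (x + 1) + boundState lam r (x - 1) : ℂ) / 2
      + pot μ lam x * boundState lam r x = energy r * boundState lam r x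
    exact_mod_cast congrArg Complex.ofReal (boundState_eigen hr0 h x)

lemma eigenfunction_succ_eq_mul {μ lam r : ℝ} (hr : r ∈ Ioo (-1) 0) {ψ : lp (fun _ : ℤ => ℂ) 2}
    (heq : ∀ x : ℤ, ψ x - (ψ (x + 1) + ψ (x - 1)) / 2 + (pot μ lam x : ℂ) * ψ x
      = (energy r : ℂ) * ψ x) (n : ℕ) :
    ψ ((n : ℤ) + 2) = r * ψ ((n : ℤ) + 1) := by
  have hright : Tendsto (fun n : ℕ => ψ ((n : ℤ) + 1)) atTop (𝓝 0) := by
    rw [tendsto_zero_iff_norm_tendsto_zero, ← Nat.cofinite_eq_atTop]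
    exact (Memℓp.tendsto_norm_cofinite_zero (by norm_num) (lp.memℓp ψ)).comp
      ((add_left_injective 1).comp Nat.cast_injective).tendsto_cofinite
  have hr1 : ‖(r : ℂ)‖ < 1 := by
    rw [Complex.norm_real, Real.norm_eq_abs, abs_lt]; exact ⟨hr.1, by linarith [hr.2]⟩
  have hrec (n : ℕ) : ψ (((n + 2 : ℕ) : ℤ) + 1)
      = (r + (r : ℂ)⁻¹) * ψ (((n + 1 : ℕ) : ℤ) + 1) - ψ ((n : ℤ) + 1) := by
    have := heq ((n : ℤ) + 2)
    rw [pot_eq_zero_of_two_le μ lam (by omega), show (n : ℤ) + 2 - 1 = n + 1 by ring,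
      Complex.ofReal_zero] at this
    push_cast [energy] at this ⊢
    rw [show (n : ℤ) + 1 + 1 + 1 = n + 2 + 1 by ring, show (n : ℤ) + 1 + 1 = n + 2 by ring]
    linear_combination -2 * this
  simpa [add_assoc, one_add_one_eq_two] using succ_eq_mul_of_recurrence_of_tendsto_zero
    (Complex.ofReal_ne_zero.mpr hr.2.ne) hr1 hrec hright n

theorem exists_secular_eq_zero {μ lam z : ℝ} (hz : 2 < z) (h : IsEvenEigenvalue μ lam z) :
    ∃ r ∈ Ioo (-1) 0, energy r = z ∧ secular μ lam r = 0 := by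
  obtain ⟨ψ, hψ0, heven, heq⟩ := h
  obtain ⟨r, hr, rfl⟩ := exists_energy_eq hz
  refine ⟨r, hr, rfl, ?_⟩
  have hr0 : (r : ℂ) ≠ 0 := Complex.ofReal_ne_zero.mpr hr.2.ne
  have henergy : ((energy r : ℝ) : ℂ) = 1 - (r + (r : ℂ)⁻¹) / 2 := by push_cast [energy]; ring
  have hgeom := eigenfunction_succ_eq_mul hr heq
  have hψ2 : ψ 2 = r * ψ 1 := by simpa using hgeom 0
  have heq1 : ψ 0 = ((r : ℂ)⁻¹ + lam) * ψ 1 := by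
    have := heq 1
    rw [show pot μ lam 1 = lam / 2 by simp [pot], henergy, show (1 : ℤ) + 1 = 2 by rfl, hψ2,
      sub_self] at this
    push_cast at this
    linear_combination -2 * this
  have heq0 : (μ + (r + (r : ℂ)⁻¹) / 2) * ψ 0 = ψ 1 := by
    have := heq 0
    rw [show pot μ lam 0 = μ by simp [pot], henergy, zero_sub, heven 1, zero_add] at this
    linear_combination this
  have hψ1 : ψ 1 ≠ 0 := by
    intro h1
    have hpos (n : ℕ) : ψ ((n : ℤ) + 1) = 0 := by
      induction n with
      | zero => simpa using h1
      | succ n ih => rw [Nat.cast_succ, add_assoc, one_add_one_eq_two, hgeom, ih, mul_zero]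
    have hzero : ψ 0 = 0 := by rw [heq1, h1, mul_zero]
    refine hψ0 (lp.eq_zero_iff_coeFn_eq_zero.mpr (funext fun x => ?_))
    have hnat (n : ℕ) : ψ n = 0 := by
      rcases n with _ | n
      exacts [hzero, by simpa using hpos n]
    obtain ⟨n, rfl | rfl⟩ := Int.eq_nat_or_neg x
    exacts [hnat n, (heven n).trans (hnat n)]
  have : ((secular μ lam r : ℝ) : ℂ) * ψ 1 = 0 := by
    push_cast [secular]
    linear_combination (-(r * (μ + (r + (r : ℂ)⁻¹) / 2))) * heq1 + r * heq0
      - ((μ + (r + (r : ℂ)⁻¹) / 2) * ψ 1) * mul_inv_cancel₀ hr0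
  exact_mod_cast (mul_eq_zero.mp this).resolve_right hψ1

lemma secular_neg_one (μ lam : ℝ) : secular μ lam (-1) = -(μ * lam - μ - lam) := by
  norm_num [secular]; ring

lemma secular_pos_of_secular_zero_right_eq_zero {μ lam r : ℝ} (hlam : 0 < lam) (hr : r ≠ 0)
    (h : secular μ 0 r = 0) : 0 < secular μ lam r := by
  have : secular μ lam r = lam * r ^ 2 := by
    simp only [secular] at h ⊢
    linear_combination (1 + lam * r) * h
  rw [this]
  positivity

lemma secular_pos_of_secular_zero_left_eq_zero {μ lam r : ℝ} (hμ : 0 < μ) (hr : r < 0)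
    (h : secular 0 lam r = 0) : 0 < secular μ lam r := by
  have hw : (r + r⁻¹) / 2 < 0 := by linarith [inv_lt_zero.mpr hr]
  simp only [secular, zero_add] at h ⊢
  nlinarith

lemma continuousOn_secular (μ lam : ℝ) : ContinuousOn (secular μ lam) (Iio 0) := fun x hx => by
  have hx0 : x ≠ 0 := (mem_Iio.mp hx).ne
  unfold secular
  exact ContinuousAt.continuousWithinAt (by fun_prop (disch := assumption))

lemma tendsto_secular_nhdsLT_zero (μ lam : ℝ) : Tendsto (secular μ lam) (𝓝[<] 0) atBot := by
  have hid : Tendsto (fun r : ℝ => r) (𝓝[<] 0) (𝓝 0) := nhdsWithin_le_nhds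
  have h1 : Tendsto (fun r => 1 + lam * r) (𝓝[<] (0 : ℝ)) (𝓝 1) := by
    simpa using (hid.const_mul lam).const_add 1
  have h2 : Tendsto (fun r => μ + (r + r⁻¹) / 2) (𝓝[<] (0 : ℝ)) atBot :=
    tendsto_atBot_add_const_left _ μ
      ((hid.add_atBot tendsto_inv_nhdsLT_zero).atBot_div_const two_pos)
  exact ((h1.pos_mul_atBot one_pos h2).atBot_add hid.neg).congr fun r => by
    simp [secular, sub_eq_add_neg]

lemma exists_secular_eq_zero_mem_Ioo_neg_one {μ lam a : ℝ} (h : 0 < μ * lam - μ - lam)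
    (ha : a ∈ Ioo (-1) 0) (hpos : 0 < secular μ lam a) : ∃ c ∈ Ioo (-1) a, secular μ lam c = 0 :=
  intermediate_value_Ioo ha.1.le ((continuousOn_secular μ lam).mono fun _ hx => hx.2.trans_lt ha.2)
    ⟨by rw [secular_neg_one]; linarith, hpos⟩

lemma exists_secular_eq_zero_mem_Ioo_zero {μ lam a : ℝ} (ha : a < 0)
    (hpos : 0 < secular μ lam a) : ∃ d ∈ Ioo a 0, secular μ lam d = 0 := by
  obtain ⟨b, hbneg, hb⟩ : ∃ b, secular μ lam b < 0 ∧ b ∈ Ioo a 0 :=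
    (((tendsto_secular_nhdsLT_zero μ lam).eventually (eventually_lt_atBot 0)).and
      (Ioo_mem_nhdsLT ha)).exists
  obtain ⟨d, hd, hd0⟩ := intermediate_value_Ioo' hb.1.le
    ((continuousOn_secular μ lam).mono fun _ hx => hx.2.trans_lt hb.2) ⟨hbneg, hpos⟩
  exact ⟨d, ⟨hd.1, hd.2.trans hb.2⟩, hd0⟩

/-- Region `G_{02}`: if `μ > 1` and `μλ − μ − λ > 0`, then `H_{μλ}` has no even
eigenvalue in `(−∞, 0)`; moreover, if `z_μ > 2` is an even eigenvalue of `H_{μ0}` and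
`z_λ > 2` is an even eigenvalue of `H_{0λ}`, then there exist even eigenvalues `ζ₁, ζ₂`
of `H_{μλ}` with `2 < ζ₁ < min(z_μ, z_λ) ≤ max(z_μ, z_λ) < ζ₂`. -/
theorem region_G02 (μ lam : ℝ) (hμ : 1 < μ) (h : 0 < μ * lam - μ - lam) :
    (∀ z : ℝ, z < 0 → ¬ IsEvenEigenvalue μ lam z) ∧
    ∀ zμ zlam : ℝ, 2 < zμ → IsEvenEigenvalue μ 0 zμ →
      2 < zlam → IsEvenEigenvalue 0 lam zlam →
      ∃ ζ₁ ζ₂ : ℝ, IsEvenEigenvalue μ lam ζ₁ ∧ IsEvenEigenvalue μ lam ζ₂ ∧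
        2 < ζ₁ ∧ ζ₁ < min zμ zlam ∧ max zμ zlam < ζ₂ := by
  have hlam : 0 < lam := by nlinarith
  refine ⟨fun z => not_isEvenEigenvalue_of_neg (by linarith) hlam.le, ?_⟩
  intro zμ zlam hzμ hevμ hzlam hevlam
  obtain ⟨rμ, hrμ, rfl, hsμ⟩ := exists_secular_eq_zero hzμ hevμ
  obtain ⟨rlam, hrlam, rfl, hslam⟩ := exists_secular_eq_zero hzlam hevlam
  have hposμ := secular_pos_of_secular_zero_right_eq_zero hlam hrμ.2.ne hsμ
  have hposlam := secular_pos_of_secular_zero_left_eq_zero (μ := μ) (by linarith) hrlam.2 hslam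
  have hmin : min rμ rlam ∈ Ioo (-1) 0 := ⟨lt_min hrμ.1 hrlam.1, min_lt_of_left_lt hrμ.2⟩
  have hmax : max rμ rlam ∈ Ioo (-1) 0 := ⟨lt_max_of_lt_left hrμ.1, max_lt hrμ.2 hrlam.2⟩
  obtain ⟨c, hc, hc0⟩ := exists_secular_eq_zero_mem_Ioo_neg_one h hmin
    (by rcases min_choice rμ rlam with e | e <;> rw [e] <;> assumption)
  obtain ⟨d, hd, hd0⟩ := exists_secular_eq_zero_mem_Ioo_zero hmax.2
    (by rcases max_choice rμ rlam with e | e <;> rw [e] <;> assumption)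
  have hc' : c ∈ Ioo (-1) 0 := ⟨hc.1, hc.2.trans hmin.2⟩
  have hd' : d ∈ Ioo (-1) 0 := ⟨hmax.1.trans hd.1, hd.2⟩
  refine ⟨energy c, energy d,
    isEvenEigenvalue_energy hc'.2.ne (abs_lt.mpr ⟨hc'.1, hc'.2.trans one_pos⟩) hc0,
    isEvenEigenvalue_energy hd'.2.ne (abs_lt.mpr ⟨hd'.1, hd'.2.trans one_pos⟩) hd0,
    two_lt_energy hc'.2 hc'.1.ne', lt_min ?_ ?_, max_lt ?_ ?_⟩
  · exact energy_strictMonoOn hc' hrμ (hc.2.trans_le (min_le_left _ _))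
  · exact energy_strictMonoOn hc' hrlam (hc.2.trans_le (min_le_right _ _))
  · exact energy_strictMonoOn hrμ hd' ((le_max_left _ _).trans_lt hd.1)
  · exact energy_strictMonoOn hrlam hd' ((le_max_right _ _).trans_lt hd.1)
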